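/- Let R be a commutative graded-commutative ℚ-algebra graded by even nonnegative degrees, π* : S → R an injective graded ring homomorphism, and x ∈ R an element with components x_k in degree 2k such that x_0 = r·1 with r a nonzero rational, and such that x^n lies in the image of π* for some n ≥ 1. Then every homogeneous component x_k of x lies in the image of π*. -/
import Mathlib

open DirectSum

section Aux

variable {R : Type*} [CommRing R] [Algebra ℚ R]
    (𝒜 : ℕ → Submodule ℚ R) [GradedAlgebra 𝒜]

lemma proj_mul_low_vanish (a b : R) (p q : ℕ)
    (ha : ∀ j < p, GradedRing.proj 𝒜 j a = 0)
    (hb : ∀ j < q, GradedRing.proj 𝒜 j b = 0) :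
    ∀ m < p + q, GradedRing.proj 𝒜 m (a * b) = 0 := by
  classical
  intro m hm
  rw [GradedRing.proj_apply, DirectSum.decompose_mul, DirectSum.coe_mul_apply]
  apply Finset.sum_eq_zero
  rintro ⟨i, j⟩ hij
  simp only [Finset.mem_filter, Finset.mem_product, DFinsupp.mem_support_iff] at hij
  obtain ⟨⟨hi, hj⟩, hsum⟩ := hij
  exfalso
  have hip : p ≤ i := by
    by_contra h
    exact hi (Subtype.ext (by simpa [GradedRing.proj_apply] using ha i (not_le.mp h)))
  have hjq : q ≤ j := by
    by_contra h
    exact hj (Subtype.ext (by simpa [GradedRing.proj_apply] using hb j (not_le.mp h)))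
  omega

lemma proj_pow_low_vanish (t : R) (p : ℕ)
    (ht : ∀ j < p, GradedRing.proj 𝒜 j t = 0) :
    ∀ i : ℕ, ∀ m < i * p, GradedRing.proj 𝒜 m (t ^ i) = 0 := by
  intro i
  induction i with
  | zero => intro m hm; omega
  | succ i ih =>
      intro m hm
      rw [pow_succ]
      have hm' : m < i * p + p := by rw [Nat.succ_mul] at hm; omega
      exact proj_mul_low_vanish 𝒜 _ _ (i * p) p ih ht m hm'

lemma proj_proj (i j : ℕ) (y : R) :
    GradedRing.proj 𝒜 j (GradedRing.proj 𝒜 i y) =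
      if i = j then GradedRing.proj 𝒜 i y else 0 := by
  have hmem : GradedRing.proj 𝒜 i y ∈ 𝒜 i := by
    rw [GradedRing.proj_apply]; exact SetLike.coe_mem _
  split_ifs with h
  · subst h
    rw [GradedRing.proj_apply, DirectSum.decompose_of_mem_same 𝒜 hmem]
  · rw [GradedRing.proj_apply, DirectSum.decompose_of_mem_ne 𝒜 hmem h]

lemma proj_smul (q : ℚ) (j : ℕ) (y : R) :
    GradedRing.proj 𝒜 j (q • y) = q • GradedRing.proj 𝒜 j y := by
  rw [GradedRing.proj_apply, GradedRing.proj_apply, DirectSum.decompose_smul]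
  rfl

end Aux

/-- Let `R` be a commutative graded ℚ-algebra (graded by even
nonnegative degrees, indexed here by `k ↔` degree `2k`), `S ⊆ R` a graded subalgebra
(the image of an injective graded ring homomorphism `π*`), and `x ∈ R` an element whose
degree-zero component is `r·1` with `r` a nonzero rational, such that `x^n ∈ S` for some
`n ≥ 1`. Then every homogeneous component of `x` lies in `S`. -/
theorem homogeneous_components_lie_in_graded_subalgebra
    {R : Type*} [CommRing R] [Algebra ℚ R]
    (𝒜 : ℕ → Submodule ℚ R) [GradedAlgebra 𝒜]
    (S : Subalgebra ℚ R)
    (hSgraded : ∀ y ∈ S, ∀ k : ℕ, (GradedRing.proj 𝒜 k) y ∈ S)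
    (x : R) (r : ℚ) (hr : r ≠ 0)
    (h0 : GradedRing.proj 𝒜 0 x = algebraMap ℚ R r)
    (n : ℕ) (hn : 1 ≤ n) (hxn : x ^ n ∈ S) :
    ∀ k : ℕ, (GradedRing.proj 𝒜 k) x ∈ S := by
  obtain ⟨m, rfl⟩ : ∃ m, n = m + 1 := ⟨n - 1, (Nat.succ_pred_eq_of_pos hn).symm⟩
  intro k
  induction k using Nat.strong_induction_on with
  | _ k ih =>
  rcases Nat.eq_zero_or_pos k with hk0 | hK
  · subst hk0; rw [h0]; exact S.algebraMap_mem r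
  -- k ≥ 1; let s be the sum of the components of degree < k, t the tail
  set s : R := ∑ j ∈ Finset.range k, GradedRing.proj 𝒜 j x with hs_def
  have hsS : s ∈ S := Subalgebra.sum_mem S fun j hj => ih j (Finset.mem_range.mp hj)
  have hproj_s : ∀ j, GradedRing.proj 𝒜 j s =
      if j < k then GradedRing.proj 𝒜 j x else 0 := by
    intro j
    rw [hs_def, map_sum]
    simp_rw [proj_proj 𝒜]
    rcases lt_or_ge j k with h | h
    · rw [if_pos h]
      simp [Finset.sum_ite_eq', Finset.mem_range.mpr h]
    · rw [if_neg (not_lt.mpr h)]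
      apply Finset.sum_eq_zero
      intro i hi
      exact if_neg (by have := Finset.mem_range.mp hi; omega)
  set t : R := x - s with ht_def
  have ht_low : ∀ j < k, GradedRing.proj 𝒜 j t = 0 := by
    intro j hj
    rw [ht_def, map_sub, hproj_s, if_pos hj, sub_self]
  have ht_k : GradedRing.proj 𝒜 k t = GradedRing.proj 𝒜 k x := by
    rw [ht_def, map_sub, hproj_s, if_neg (lt_irrefl k), sub_zero]
  -- degree-zero part of s^m
  have hproj0s : GradedRing.proj 𝒜 0 s = algebraMap ℚ R r := by
    rw [hproj_s, if_pos hK, h0]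
  have hproj0pow : ∀ i : ℕ, GradedRing.proj 𝒜 0 (s ^ i) = algebraMap ℚ R (r ^ i) := by
    intro i
    have h1 := map_pow (GradedRing.projZeroRingHom 𝒜) s i
    simp only [GradedRing.projZeroRingHom_apply] at h1
    rw [GradedRing.proj_apply, h1]
    rw [← GradedRing.proj_apply, hproj0s, map_pow]
  set u : R := s ^ m - algebraMap ℚ R (r ^ m) with hu_def
  have hu0 : ∀ j < 1, GradedRing.proj 𝒜 j u = 0 := by
    intro j hj
    interval_cases j
    rw [hu_def, map_sub, hproj0pow]
    have hmem0 : algebraMap ℚ R (r ^ m) ∈ 𝒜 0 := by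
      have h1 : algebraMap ℚ R (r ^ m) = (r ^ m) • (1 : R) := by
        rw [Algebra.smul_def, mul_one]
      rw [h1]
      exact Submodule.smul_mem _ _ SetLike.GradedOne.one_mem
    rw [GradedRing.proj_apply, DirectSum.decompose_of_mem_same 𝒜 hmem0, sub_self]
  -- key computation of proj k (s^m * t)
  have hmidmul : GradedRing.proj 𝒜 k (s ^ m * t) = r ^ m • GradedRing.proj 𝒜 k x := by
    have hsplit : s ^ m * t = u * t + (r ^ m) • t := by
      rw [hu_def, Algebra.smul_def]; ring
    rw [hsplit, map_add, proj_smul, ht_k,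
      proj_mul_low_vanish 𝒜 u t 1 k hu0 ht_low k (by omega), zero_add]
  -- expand x^(m+1) = (s + t)^(m+1)
  have hx : x = s + t := by rw [ht_def]; ring
  have hexp : x ^ (m + 1) =
      (∑ i ∈ Finset.range m, s ^ i * t ^ (m + 1 - i) * ((m + 1).choose i : R))
        + s ^ m * t * ((m + 1 : ℕ) : R) + s ^ (m + 1) := by
    rw [hx, add_pow, Finset.sum_range_succ, Finset.sum_range_succ]
    simp [Nat.choose_succ_self_right, pow_succ]
  -- apply proj k
  have hkey : GradedRing.proj 𝒜 k (x ^ (m + 1)) =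
      (((m + 1 : ℕ) : ℚ) * r ^ m) • GradedRing.proj 𝒜 k x
        + GradedRing.proj 𝒜 k (s ^ (m + 1)) := by
    rw [hexp, map_add, map_add, map_sum]
    have hsum0 : (∑ i ∈ Finset.range m,
        GradedRing.proj 𝒜 k (s ^ i * t ^ (m + 1 - i) * ((m + 1).choose i : R))) = 0 := by
      apply Finset.sum_eq_zero
      intro i hi
      have him : i < m := Finset.mem_range.mp hi
      have : s ^ i * t ^ (m + 1 - i) * ((m + 1).choose i : R)
          = (s ^ i * ((m + 1).choose i : R)) * t ^ (m + 1 - i) := by ring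
      rw [this]
      exact proj_mul_low_vanish 𝒜 _ _ 0 ((m + 1 - i) * k) (by omega)
        (proj_pow_low_vanish 𝒜 t k ht_low (m + 1 - i)) k
        (by
          have h2 : 2 ≤ m + 1 - i := by omega
          have h3 := Nat.mul_le_mul_right k h2
          omega)
    have hmid : GradedRing.proj 𝒜 k (s ^ m * t * ((m + 1 : ℕ) : R))
        = (((m + 1 : ℕ) : ℚ) * r ^ m) • GradedRing.proj 𝒜 k x := by
      have hcast : s ^ m * t * ((m + 1 : ℕ) : R) = ((m + 1 : ℕ) : ℚ) • (s ^ m * t) := by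
        rw [Algebra.smul_def, map_natCast]; ring
      rw [hcast, proj_smul, hmidmul, smul_smul]
    rw [hsum0, hmid, zero_add]
  -- solve for proj k x
  set c : ℚ := ((m + 1 : ℕ) : ℚ) * r ^ m with hc_def
  have hc : c ≠ 0 := by
    apply mul_ne_zero
    · exact_mod_cast Nat.succ_ne_zero m
    · exact pow_ne_zero m hr
  have hfinal : GradedRing.proj 𝒜 k x =
      c⁻¹ • (GradedRing.proj 𝒜 k (x ^ (m + 1)) - GradedRing.proj 𝒜 k (s ^ (m + 1))) := by
    rw [hkey, add_sub_cancel_right, inv_smul_smul₀ hc]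
  rw [hfinal]
  exact S.smul_mem (S.sub_mem (hSgraded _ hxn k)
    (hSgraded _ (pow_mem hsS (m + 1)) k)) _
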